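/- Let a > 0 and z ∈ ℂ with Re z < 0, and define R₁(w) = ∑_{k=0}^∞ (-1)^k/(k² + w²) - 1/(2w²) for Re w > 0. Then R₁(w) = π/(2w·sinh(πw)), and consequently |R₁(w) - πe^{-πw}/w| ≤ (π/|w|)·|e^{-πw}|·(2|e^{-2πw}|/(1 - |e^{-2πw}|)) whenever |e^{-2πw}| < 1; in particular R₁(w)·(w/π)·e^{πw} → 1 as Re w → ∞. -/

import Mathlib

/-!
Put `x = w i` in Euler's partial fraction expansion
`π cot(π x) = 1/x + ∑_{n ≥ 1} (1/(x - n) + 1/(x + n))`: this gives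
`∑_{k ≥ 0} 1/(k² + w²) = 1/(2w²) + π coth(πw)/(2w)`. The alternating series is twice its even part
minus the full series, and the even part is the same series at `w/2` scaled by `1/4`; the identity
`coth(πw/2) - coth(πw) = 1/sinh(πw)` then yields `R₁(w) = π/(2w sinh(πw))`. Finally
`1/(2 sinh z) = e^{-z}/(1 - e^{-2z})`, and `1/(1 - q) - 1 = q/(1 - q)` is small with `q = e^{-2πw}`.
-/

open Real Complex Filter

theorem HasSum.neg_one_pow_mul_of_even {α : Type*} [Ring α] [TopologicalSpace α]
    [IsTopologicalRing α] {f : ℕ → α} {a b : α} (hf : HasSum f a)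
    (he : HasSum (fun k ↦ f (2 * k)) b) :
    HasSum (fun k ↦ (-1) ^ k * f k) (2 * b - a) := by
  classical
  set g : ℕ → α := fun k ↦ if Even k then f k else 0
  have hg : HasSum g b := by
    refine (Function.Injective.hasSum_iff (mul_right_injective₀ two_ne_zero) ?_).mp ?_
    · rintro k hk
      simp only [g, ite_eq_right_iff]
      rintro ⟨j, rfl⟩
      exact absurd ⟨j, two_mul j⟩ hk
    · simpa [g, Function.comp_def] using he
  refine ((hg.mul_left 2).sub hf).congr_fun fun k ↦ ?_
  rcases Nat.even_or_odd k with hk | hk <;>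
    simp [g, hk, hk.neg_one_pow, Nat.not_even_iff_odd.mpr, two_mul]

theorem norm_inv_one_sub_sub_one_le {𝕜 : Type*} [NormedField 𝕜] {q : 𝕜} (hq : ‖q‖ < 1) :
    ‖(1 - q)⁻¹ - 1‖ ≤ ‖q‖ / (1 - ‖q‖) := by
  have hpos : 0 < 1 - ‖q‖ := sub_pos.mpr hq
  have hle : 1 - ‖q‖ ≤ ‖1 - q‖ := by simpa using norm_sub_norm_le (1 : 𝕜) q
  have hne : 1 - q ≠ 0 := norm_pos_iff.mp (hpos.trans_le hle)
  rw [show (1 - q)⁻¹ - 1 = q / (1 - q) by field_simp; ring, norm_div]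
  exact div_le_div_of_nonneg_left (norm_nonneg q) hpos hle

namespace Complex

theorem mul_I_mem_integerComplement {w : ℂ} (hw : w.re ≠ 0) : w * I ∈ integerComplement := by
  rintro ⟨n, hn⟩
  exact hw (by simpa using congrArg im hn.symm)

theorem half_mul_I_mem_integerComplement {w : ℂ} (hw : w * I ∈ integerComplement) :
    w / 2 * I ∈ integerComplement := by
  rintro ⟨n, hn⟩
  exact hw ⟨2 * n, by push_cast; linear_combination 2 * hn⟩

-- Holds without hypotheses: if `sinh (2 * u) = 0` then `sinh u = 0` or `cosh u = 0`, and both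
-- sides are `0` under the convention `x / 0 = 0`.
theorem cosh_div_sinh_sub_cosh_two_mul_div_sinh_two_mul (u : ℂ) :
    cosh u / sinh u - cosh (2 * u) / sinh (2 * u) = 1 / sinh (2 * u) := by
  rw [sinh_two_mul, cosh_two_mul]
  rcases eq_or_ne (sinh u) 0 with hs | hs
  · simp [hs]
  rcases eq_or_ne (cosh u) 0 with hc | hc
  · simp [hc]
  field_simp
  linear_combination cosh_sq_sub_sinh_sq u

theorem inv_two_mul_sinh (z : ℂ) :
    (2 * sinh z)⁻¹ = exp (-z) * (1 - exp (-2 * z))⁻¹ := by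
  have h : 2 * sinh z = exp z * (1 - exp (-2 * z)) := by
    rw [sinh, mul_sub, mul_one, ← exp_add]
    ring_nf
  rw [h, mul_inv, exp_neg]

theorem hasSum_one_div_sq_add_sq {w : ℂ} (hw : w * I ∈ integerComplement) :
    HasSum (fun n : ℕ ↦ 1 / ((n : ℂ) ^ 2 + w ^ 2))
      (1 / (2 * w ^ 2) + π * cosh (π * w) / (2 * w * sinh (π * w))) := by
  have hw0 : w ≠ 0 := by rintro rfl; exact integerComplement.ne_zero hw (zero_mul I)
  have hsinh : sinh (π * w) ≠ 0 := by
    have := sin_pi_mul_ne_zero hw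
    rwa [← mul_assoc, sin_mul_I, mul_ne_zero_iff, and_iff_left I_ne_zero] at this
  have hterm (n : ℕ) :
      cotTerm (w * I) n = -2 * w * I * (1 / (((n + 1 : ℕ) : ℂ) ^ 2 + w ^ 2)) := by
    have h : (w * I + (n + 1)) * (w * I - (n + 1)) = -(((n + 1 : ℕ) : ℂ) ^ 2 + w ^ 2) := by
      push_cast; linear_combination w ^ 2 * I_sq
    rw [cotTerm_identity hw, h, one_div_neg_eq_neg_one_div]
    ring
  have hcot : π * cot (π * (w * I)) - 1 / (w * I) =
      -2 * w * I * ((π * cosh (π * w) / sinh (π * w) - 1 / w) / (2 * w)) := by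
    rw [cot_eq_cos_div_sin, ← mul_assoc, cos_mul_I, sin_mul_I]
    field_simp
    linear_combination (π * w * cosh (π * w) - sinh (π * w)) * I_sq
  have hsum : HasSum (fun n : ℕ ↦ cotTerm (w * I) n) (π * cot (π * (w * I)) - 1 / (w * I)) := by
    rw [cot_series_rep' hw]; exact (summable_cotTerm hw).hasSum
  rw [hcot] at hsum
  have htail := (hasSum_mul_left_iff (by simp [hw0])).mp (hsum.congr_fun fun n ↦ (hterm n).symm)
  have hval : 1 / (2 * w ^ 2) + π * cosh (π * w) / (2 * w * sinh (π * w)) =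
      1 / (((0 : ℕ) : ℂ) ^ 2 + w ^ 2) + (π * cosh (π * w) / sinh (π * w) - 1 / w) / (2 * w) := by
    field_simp
    ring
  rw [hval]
  exact HasSum.zero_add (f := fun n : ℕ ↦ 1 / ((n : ℂ) ^ 2 + w ^ 2)) htail

theorem hasSum_neg_one_pow_div_sq_add_sq {w : ℂ} (hw : w * I ∈ integerComplement) :
    HasSum (fun k : ℕ ↦ (-1) ^ k / ((k : ℂ) ^ 2 + w ^ 2))
      (1 / (2 * w ^ 2) + π / (2 * w * sinh (π * w))) := by
  have heven : HasSum (fun k : ℕ ↦ 1 / (((2 * k : ℕ) : ℂ) ^ 2 + w ^ 2))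
      (1 / 4 * (1 / (2 * (w / 2) ^ 2) +
        π * cosh (π * (w / 2)) / (2 * (w / 2) * sinh (π * (w / 2))))) := by
    refine ((hasSum_one_div_sq_add_sq (half_mul_I_mem_integerComplement hw)).mul_left
      (1 / 4)).congr_fun fun k ↦ ?_
    push_cast
    field_simp
    ring
  have hcoth := cosh_div_sinh_sub_cosh_two_mul_div_sinh_two_mul (π * (w / 2))
  rw [show 2 * (π * (w / 2)) = π * w by ring] at hcoth
  have hval : 1 / (2 * w ^ 2) + π / (2 * w * sinh (π * w)) =
      2 * (1 / 4 * (1 / (2 * (w / 2) ^ 2) +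
        π * cosh (π * (w / 2)) / (2 * (w / 2) * sinh (π * (w / 2))))) -
      (1 / (2 * w ^ 2) + π * cosh (π * w) / (2 * w * sinh (π * w))) := by
    linear_combination -(π / (2 * w)) * hcoth
  simpa only [mul_one_div, hval] using (hasSum_one_div_sq_add_sq hw).neg_one_pow_mul_of_even heven

theorem tendsto_exp_neg_mul_comap_re_atTop {c : ℝ} (hc : 0 < c) :
    Tendsto (fun w : ℂ ↦ exp (-c * w)) (comap re atTop) (nhds 0) := by
  refine tendsto_exp_comap_re_atBot.comp (tendsto_comap_iff.mpr ?_)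
  have : re ∘ (fun w : ℂ ↦ -c * w) = fun w ↦ -c * w.re := by
    ext w; simp
  rw [this]
  exact tendsto_comap.const_mul_atTop_of_neg (by linarith)

theorem pi_div_two_mul_sinh_pi_mul (w : ℂ) :
    π / (2 * w * sinh (π * w)) = π * exp (-π * w) / w * (1 - exp (-2 * π * w))⁻¹ := by
  rw [show (π : ℂ) / (2 * w * sinh (π * w)) = π / w * (2 * sinh (π * w))⁻¹ by ring,
    inv_two_mul_sinh]
  ring_nf

theorem norm_pi_div_two_mul_sinh_pi_mul_sub_le {w : ℂ} (hq : ‖exp (-2 * π * w)‖ < 1) :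
    ‖π / (2 * w * sinh (π * w)) - π * exp (-π * w) / w‖ ≤
      π / ‖w‖ * ‖exp (-π * w)‖ * (‖exp (-2 * π * w)‖ / (1 - ‖exp (-2 * π * w)‖)) := by
  rw [pi_div_two_mul_sinh_pi_mul, ← mul_sub_one, norm_mul, norm_div, norm_mul, norm_real,
    Real.norm_of_nonneg pi_pos.le, mul_div_right_comm]
  gcongr
  exact norm_inv_one_sub_sub_one_le hq

theorem tendsto_pi_div_two_mul_sinh_pi_mul :
    Tendsto (fun w : ℂ ↦ π / (2 * w * sinh (π * w)) * (w / π) * exp (π * w))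
      (comap re atTop) (nhds 1) := by
  have hq : Tendsto (fun w : ℂ ↦ exp (-2 * π * w)) (comap re atTop) (nhds 0) := by
    convert tendsto_exp_neg_mul_comap_re_atTop (mul_pos two_pos pi_pos) using 3
    push_cast
    ring
  have hlim := ((tendsto_const_nhds (x := (1 : ℂ))).sub hq).inv₀ (by simp)
  rw [sub_zero, inv_one] at hlim
  refine hlim.congr' ?_
  filter_upwards [tendsto_comap.eventually (eventually_ne_atTop 0)] with w hw
  have hw0 : w ≠ 0 := by rintro rfl; exact hw rfl
  calc (1 - exp (-2 * π * w))⁻¹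
      = (1 - exp (-2 * π * w))⁻¹ * (exp (-π * w) * exp (π * w)) := by
        rw [← exp_add, show -(π : ℂ) * w + π * w = 0 by ring, exp_zero, mul_one]
    _ = π / (2 * w * sinh (π * w)) * (w / π) * exp (π * w) := by
        rw [pi_div_two_mul_sinh_pi_mul]
        field_simp

end Complex

theorem stmt18_general
    (R₁ : ℂ → ℂ)
    (hR₁ : ∀ w : ℂ, R₁ w = (∑' k : ℕ, (-1 : ℂ) ^ k / ((k : ℂ) ^ 2 + w ^ 2)) - 1 / (2 * w ^ 2)) :
    (∀ w : ℂ, 0 < w.re →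
      R₁ w = (π : ℂ) / (2 * w * Complex.sinh ((π : ℂ) * w)) ∧
      (‖Complex.exp (-2 * (π : ℂ) * w)‖ < 1 →
        ‖R₁ w - (π : ℂ) * Complex.exp (-(π : ℂ) * w) / w‖
          ≤ (π / ‖w‖) * ‖Complex.exp (-(π : ℂ) * w)‖ *
            (2 * ‖Complex.exp (-2 * (π : ℂ) * w)‖ /
              (1 - ‖Complex.exp (-2 * (π : ℂ) * w)‖)))) ∧
    Tendsto (fun w : ℂ => R₁ w * (w / (π : ℂ)) * Complex.exp ((π : ℂ) * w))
      (Filter.comap Complex.re atTop) (nhds 1) := by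
  have hR₁_eq {w : ℂ} (hw : 0 < w.re) : R₁ w = π / (2 * w * sinh (π * w)) := by
    rw [hR₁, (hasSum_neg_one_pow_div_sq_add_sq (mul_I_mem_integerComplement hw.ne')).tsum_eq]
    ring
  refine ⟨fun w hw ↦ ⟨hR₁_eq hw, fun hq ↦ ?_⟩, ?_⟩
  · rw [hR₁_eq hw]
    refine (norm_pi_div_two_mul_sinh_pi_mul_sub_le hq).trans ?_
    gcongr
    linarith [norm_nonneg (exp (-2 * π * w))]
  · refine tendsto_pi_div_two_mul_sinh_pi_mul.congr' ?_
    filter_upwards [tendsto_comap.eventually (eventually_gt_atTop 0)] with w hw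
    rw [hR₁_eq hw]

/-- The remainder `R₁(w) = S₁(w) - 1/(2w²)` of the special function
`S₁(w) = ∑_{k≥0} (-1)^k/(k²+w²)` satisfies `R₁(w) = π/(2w sinh(πw))` for `Re w > 0`;
consequently `|R₁(w) - πe^{-πw}/w| ≤ (π/|w|)|e^{-πw}|·(2|e^{-2πw}|/(1-|e^{-2πw}|))`
whenever `|e^{-2πw}| < 1`, and `R₁(w)(w/π)e^{πw} → 1` as `Re w → ∞`. -/
theorem stmt18 (a : ℝ) (ha : 0 < a) (z : ℂ) (hz : z.re < 0)
    (R₁ : ℂ → ℂ)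
    (hR₁ : ∀ w : ℂ, R₁ w = (∑' k : ℕ, (-1 : ℂ) ^ k / ((k : ℂ) ^ 2 + w ^ 2)) - 1 / (2 * w ^ 2)) :
    (∀ w : ℂ, 0 < w.re →
      R₁ w = (π : ℂ) / (2 * w * Complex.sinh ((π : ℂ) * w)) ∧
      (‖Complex.exp (-2 * (π : ℂ) * w)‖ < 1 →
        ‖R₁ w - (π : ℂ) * Complex.exp (-(π : ℂ) * w) / w‖
          ≤ (π / ‖w‖) * ‖Complex.exp (-(π : ℂ) * w)‖ *
            (2 * ‖Complex.exp (-2 * (π : ℂ) * w)‖ /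
              (1 - ‖Complex.exp (-2 * (π : ℂ) * w)‖)))) ∧
    Tendsto (fun w : ℂ => R₁ w * (w / (π : ℂ)) * Complex.exp ((π : ℂ) * w))
      (Filter.comap Complex.re atTop) (nhds 1) :=
  stmt18_general R₁ hR₁
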